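/- Minimal output entropy of a Pauli channel: let Λ(ρ) = Σ_{i=0}^{3} p_i σ_i ρ σ_i be the generalized depolarizing (Pauli) channel on 2×2 density matrices, where σ_0 = I, σ_1, σ_2, σ_3 are the Pauli matrices and (p_i) is a probability distribution. Then the minimum over all pure qubit states |ψ⟩ of S(Λ(|ψ⟩⟨ψ|)) equals H(λ), where λ is the sum of the two largest of the probabilities p_0, p_1, p_2, p_3 and H is the binary entropy function. Consequently the one-shot classical capacity is C_1(Λ) = 1 − min_ψ S(Λ(|ψ⟩⟨ψ|)) = 1 − H(1−λ). -/

import Mathlib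

/-!
Write a qubit state as `ρ = (1 + r·σ)/2` with Bloch vector `r`, `|r| ≤ 1`. Its entropy is
`H((1 + |r|)/2)`, a decreasing function of `|r|`, and `4 det ρ = 1 - |r|²`. The Pauli channel
rescales the coordinates, `r_k ↦ t_k r_k` with `t_k = 2 (p₀ + p_k) - 1`. Every pair sum and its
complementary pair sum are at most `λ`, so `|t_k| ≤ 2λ - 1`, with equality for the axis `k` of a
maximal pair. Hence the output Bloch vector has length at most `2λ - 1`, with equality at the two
poles `±e_k`, which gives the minimal output entropy `H(λ)`. The two poles are orthogonal pure
states averaging to the maximally mixed state `1/2`, which the unital channel fixes, so this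
ensemble attains the bound `1 - H(λ)` on the Holevo quantity.
-/

noncomputable section
open scoped BigOperators Kronecker Matrix ComplexOrder
open Matrix

namespace QIT

def IsDensity {n : Type*} [Fintype n] [DecidableEq n] (ρ : Matrix n n ℂ) : Prop :=
  ρ.PosSemidef ∧ ρ.trace = 1

noncomputable def vN {n : Type*} [Fintype n] [DecidableEq n] (ρ : Matrix n n ℂ) : ℝ :=
  if h : ρ.IsHermitian then ∑ i, -(h.eigenvalues i * Real.logb 2 (h.eigenvalues i)) else 0

def proj {n : Type*} (ψ : n → ℂ) : Matrix n n ℂ :=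
  Matrix.of fun x y => ψ x * (starRingEnd ℂ) (ψ y)

def ptraceL {a b : Type*} [Fintype a] (ρ : Matrix (a × b) (a × b) ℂ) : Matrix b b ℂ :=
  Matrix.of fun i j => ∑ k, ρ (k, i) (k, j)

def ptraceR {a b : Type*} [Fintype b] (ρ : Matrix (a × b) (a × b) ℂ) : Matrix a a ℂ :=
  Matrix.of fun i j => ∑ k, ρ (i, k) (j, k)

noncomputable def ent {X Y : Type*} [Fintype X] [Fintype Y] [DecidableEq Y]
    (ψ : X × Y → ℂ) : ℝ :=
  vN (ptraceL (proj ψ))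

def IsPurification {A B : Type*} [Fintype A] [Fintype B] {dA' dB' : ℕ}
    (ρ : Matrix (A × B) (A × B) ℂ)
    (ψ : (A × Fin dA') × (B × Fin dB') → ℂ) : Prop :=
  (∑ x, ‖ψ x‖ ^ 2 = 1) ∧
  ∀ a b a' b', ρ (a, b) (a', b') =
    ∑ a2 : Fin dA', ∑ b2 : Fin dB',
      ψ ((a, a2), (b, b2)) * (starRingEnd ℂ) (ψ ((a', a2), (b', b2)))

noncomputable def Ep {A B : Type*} [Fintype A] [Fintype B] [DecidableEq A] [DecidableEq B]
    (ρ : Matrix (A × B) (A × B) ℂ) : ℝ :=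
  sInf { e : ℝ | ∃ (dA' dB' : ℕ) (ψ : (A × Fin dA') × (B × Fin dB') → ℂ),
    IsPurification ρ ψ ∧ e = ent ψ }

noncomputable def Iq {A B : Type*} [Fintype A] [Fintype B] [DecidableEq A] [DecidableEq B]
    (ρ : Matrix (A × B) (A × B) ℂ) : ℝ :=
  vN (ptraceR ρ) + vN (ptraceL ρ) - vN ρ

open Classical in
noncomputable def msqrt {n : Type*} [Fintype n] [DecidableEq n] (M : Matrix n n ℂ) : Matrix n n ℂ :=
  if h : M.PosSemidef then (h.1.eigenvectorUnitary : Matrix n n ℂ) *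
    diagonal ((↑) ∘ (√·) ∘ h.1.eigenvalues) * (star h.1.eigenvectorUnitary : Matrix n n ℂ) else 0

noncomputable def fid {n : Type*} [Fintype n] [DecidableEq n] (ρ σ : Matrix n n ℂ) : ℝ :=
  ((msqrt (msqrt ρ * σ * msqrt ρ)).trace).re

noncomputable def bures {n : Type*} [Fintype n] [DecidableEq n] (ρ σ : Matrix n n ℂ) : ℝ :=
  2 * Real.sqrt (1 - fid ρ σ)

noncomputable def traceNorm {n : Type*} [Fintype n] [DecidableEq n] (X : Matrix n n ℂ) : ℝ :=
  ((msqrt (Xᴴ * X)).trace).re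

def IsPOVM {n : Type*} [Fintype n] [DecidableEq n] {k : ℕ} (M : Fin k → Matrix n n ℂ) : Prop :=
  (∀ i, (M i).PosSemidef) ∧ ∑ i, M i = 1

noncomputable def shannon {k : Type*} [Fintype k] (p : k → ℝ) : ℝ :=
  ∑ i, -(p i * Real.logb 2 (p i))

noncomputable def miJoint {k l : Type*} [Fintype k] [Fintype l] (p : k × l → ℝ) : ℝ :=
  shannon (fun i => ∑ j, p (i, j)) + shannon (fun j => ∑ i, p (i, j)) - shannon p

noncomputable def Ic {A B : Type*} [Fintype A] [Fintype B] [DecidableEq A] [DecidableEq B]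
    (ρ : Matrix (A × B) (A × B) ℂ) : ℝ :=
  sSup { e : ℝ | ∃ (k l : ℕ) (MA : Fin k → Matrix A A ℂ) (MB : Fin l → Matrix B B ℂ),
    IsPOVM MA ∧ IsPOVM MB ∧
    e = miJoint (fun ij : Fin k × Fin l => (((MA ij.1 ⊗ₖ MB ij.2) * ρ).trace).re) }

noncomputable def probOf {A B : Type*} [Fintype A] [Fintype B] [DecidableEq A] [DecidableEq B]
    (M : Matrix A A ℂ) (ρ : Matrix (A × B) (A × B) ℂ) : ℝ :=
  (((M ⊗ₖ (1 : Matrix B B ℂ)) * ρ).trace).re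

noncomputable def postB {A B : Type*} [Fintype A] [Fintype B] [DecidableEq A] [DecidableEq B]
    (M : Matrix A A ℂ) (ρ : Matrix (A × B) (A × B) ℂ) : Matrix B B ℂ :=
  ((probOf M ρ : ℂ))⁻¹ • ptraceL ((M ⊗ₖ (1 : Matrix B B ℂ)) * ρ)

noncomputable def CA {A B : Type*} [Fintype A] [Fintype B] [DecidableEq A] [DecidableEq B]
    (ρ : Matrix (A × B) (A × B) ℂ) : ℝ :=
  sSup { c : ℝ | ∃ (k : ℕ) (M : Fin k → Matrix A A ℂ), IsPOVM M ∧
    c = vN (∑ i, (probOf (M i) ρ : ℂ) • postB (M i) ρ)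
        - ∑ i, probOf (M i) ρ * vN (postB (M i) ρ) }

noncomputable def pauli : Fin 4 → Matrix (Fin 2) (Fin 2) ℂ :=
  ![1, !![0, 1; 1, 0], !![0, -Complex.I; Complex.I, 0], !![1, 0; 0, -1]]

noncomputable def bell0 : Fin 2 × Fin 2 → ℂ :=
  fun x => if x.1 = x.2 then ((Real.sqrt 2)⁻¹ : ℝ) else 0

noncomputable def bell (i : Fin 4) : Fin 2 × Fin 2 → ℂ :=
  fun x => ∑ j, pauli i x.2 j * bell0 (x.1, j)

noncomputable def binEnt (x : ℝ) : ℝ :=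
  -(x * Real.logb 2 x) - (1 - x) * Real.logb 2 (1 - x)

noncomputable def pauliChannel (p : Fin 4 → ℝ) (X : Matrix (Fin 2) (Fin 2) ℂ) :
    Matrix (Fin 2) (Fin 2) ℂ :=
  ∑ i, (p i : ℂ) • (pauli i * X * pauli i)

noncomputable def holevoCap (Λ : Matrix (Fin 2) (Fin 2) ℂ → Matrix (Fin 2) (Fin 2) ℂ) : ℝ :=
  sSup { c : ℝ | ∃ (k : ℕ) (q : Fin k → ℝ) (ρs : Fin k → Matrix (Fin 2) (Fin 2) ℂ),
    (∀ i, 0 ≤ q i) ∧ (∑ i, q i = 1) ∧ (∀ i, IsDensity (ρs i)) ∧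
    c = vN (∑ i, (q i : ℂ) • Λ (ρs i)) - ∑ i, q i * vN (Λ (ρs i)) }

def tensPow {A B : Type*} [Fintype A] [Fintype B]
    (ρ : Matrix (A × B) (A × B) ℂ) (n : ℕ) :
    Matrix ((Fin n → A) × (Fin n → B)) ((Fin n → A) × (Fin n → B)) ℂ :=
  Matrix.of fun x y => ∏ t, ρ (x.1 t, x.2 t) (y.1 t, y.2 t)

lemma binEnt_eq_binEntropy_div (x : ℝ) : binEnt x = Real.binEntropy x / Real.log 2 := by
  simp only [binEnt, Real.binEntropy, Real.logb, Real.log_inv]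
  ring

lemma binEnt_one_sub (x : ℝ) : binEnt (1 - x) = binEnt x := by
  simp only [binEnt, sub_sub_cancel]
  ring

lemma binEnt_le_one (x : ℝ) : binEnt x ≤ 1 := by
  rw [binEnt_eq_binEntropy_div, div_le_one (Real.log_pos one_lt_two)]
  exact Real.binEntropy_le_log_two

lemma binEnt_two_inv : binEnt 2⁻¹ = 1 := by
  rw [binEnt_eq_binEntropy_div, Real.binEntropy_two_inv, div_self (Real.log_pos one_lt_two).ne']

lemma binEnt_eq_of_sq_eq {a b : ℝ} (h : (2 * a - 1) ^ 2 = (2 * b - 1) ^ 2) :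
    binEnt a = binEnt b := by
  rcases sq_eq_sq_iff_eq_or_eq_neg.1 h with h | h
  · rw [show a = b by linarith]
  · rw [show a = 1 - b by linarith, binEnt_one_sub]

lemma binEnt_le_of_sq_le {e l : ℝ} (hel : (2 * e - 1) ^ 2 ≤ (2 * l - 1) ^ 2)
    (hl : (2 * l - 1) ^ 2 ≤ 1) : binEnt l ≤ binEnt e := by
  have fold (x : ℝ) : binEnt x = binEnt (2⁻¹ + |x - 2⁻¹|) := by
    refine binEnt_eq_of_sq_eq ?_
    rw [show 2 * (2⁻¹ + |x - 2⁻¹|) - 1 = 2 * |x - 2⁻¹| by ring, mul_pow, sq_abs]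
    ring
  have h₁ : |e - 2⁻¹| ≤ |l - 2⁻¹| := sq_le_sq.1 (by nlinarith)
  have h₂ : |l - 2⁻¹| ≤ 2⁻¹ := abs_le.2 ⟨by nlinarith, by nlinarith⟩
  rw [fold l, fold e, binEnt_eq_binEntropy_div, binEnt_eq_binEntropy_div]
  gcongr 1
  refine Real.binEntropy_strictAntiOn.antitoneOn ?_ ?_ (by linarith) <;>
    constructor <;> linarith [abs_nonneg (e - 2⁻¹)]

lemma isDensity_sum_smul {n ι : Type*} [Fintype n] [DecidableEq n] [Fintype ι] {q : ι → ℝ}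
    {ρs : ι → Matrix n n ℂ} (hq : ∀ i, 0 ≤ q i) (hq₁ : ∑ i, q i = 1)
    (hρs : ∀ i, IsDensity (ρs i)) : IsDensity (∑ i, (q i : ℂ) • ρs i) := by
  refine ⟨posSemidef_sum _ fun i _ => (hρs i).1.smul (by exact_mod_cast hq i), ?_⟩
  simp only [trace_sum, trace_smul, (hρs _).2, smul_eq_mul, mul_one]
  exact_mod_cast hq₁

lemma isDensity_proj {n : Type*} [Fintype n] [DecidableEq n] {φ : n → ℂ}
    (hφ : ∑ x, ‖φ x‖ ^ 2 = 1) : IsDensity (proj φ) := by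
  refine ⟨posSemidef_vecMulVec_self_star φ, ?_⟩
  simp only [trace, proj, diag_apply, of_apply, Complex.mul_conj, Complex.normSq_eq_norm_sq]
  exact_mod_cast hφ

section QubitStates

variable {ρ : Matrix (Fin 2) (Fin 2) ℂ}

lemma exists_vN_eq_binEnt (hρ : ρ.IsHermitian) (htr : ρ.trace = 1) :
    ∃ e : ℝ, vN ρ = binEnt e ∧ (2 * e - 1) ^ 2 = 1 - 4 * ρ.det.re := by
  have hsum : hρ.eigenvalues 0 + hρ.eigenvalues 1 = 1 := by
    have := hρ.trace_eq_sum_eigenvalues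
    rw [htr, Fin.sum_univ_two] at this
    simpa using (congrArg Complex.re this).symm
  refine ⟨hρ.eigenvalues 0, ?_, ?_⟩
  · rw [vN, dif_pos hρ, Fin.sum_univ_two, binEnt,
      show hρ.eigenvalues 1 = 1 - hρ.eigenvalues 0 by linarith]
    ring
  · have hdet : ρ.det.re = hρ.eigenvalues 0 * hρ.eigenvalues 1 := by
      simp [hρ.det_eq_prod_eigenvalues, Fin.prod_univ_two]
    rw [hdet, show hρ.eigenvalues 1 = 1 - hρ.eigenvalues 0 by linarith]
    ring

lemma vN_eq_binEnt_of_sq_eq (hρ : ρ.IsHermitian) (htr : ρ.trace = 1) {l : ℝ}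
    (hl : (2 * l - 1) ^ 2 = 1 - 4 * ρ.det.re) : vN ρ = binEnt l := by
  obtain ⟨e, he, hdet⟩ := exists_vN_eq_binEnt hρ htr
  rw [he, binEnt_eq_of_sq_eq (hdet.trans hl.symm)]

lemma binEnt_le_vN_of_le_sq (hρ : ρ.IsHermitian) (htr : ρ.trace = 1) {l : ℝ}
    (hl : 1 - 4 * ρ.det.re ≤ (2 * l - 1) ^ 2) (hl₁ : (2 * l - 1) ^ 2 ≤ 1) :
    binEnt l ≤ vN ρ := by
  obtain ⟨e, he, hdet⟩ := exists_vN_eq_binEnt hρ htr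
  exact he ▸ binEnt_le_of_sq_le (hdet ▸ hl) hl₁

lemma vN_le_one (hρ : ρ.IsHermitian) (htr : ρ.trace = 1) : vN ρ ≤ 1 := by
  obtain ⟨e, he, -⟩ := exists_vN_eq_binEnt hρ htr
  exact he ▸ binEnt_le_one e

lemma vN_two_inv_smul_one : vN ((2⁻¹ : ℂ) • (1 : Matrix (Fin 2) (Fin 2) ℂ)) = 1 := by
  rw [← binEnt_two_inv]
  refine vN_eq_binEnt_of_sq_eq (PosSemidef.one.smul (by norm_num [Complex.nonneg_iff])).1 ?_ ?_
  · simp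
  · norm_num

end QubitStates

section Bloch

/-- For `ρ` Hermitian of trace one, `ρ = (1 + r₁ σ₁ + r₂ σ₂ + r₃ σ₃) / 2` with `r = bloch ρ`. -/
def bloch (ρ : Matrix (Fin 2) (Fin 2) ℂ) : Fin 3 → ℝ :=
  ![2 * (ρ 0 1).re, -2 * (ρ 0 1).im, 2 * (ρ 0 0).re - 1]

variable {ρ : Matrix (Fin 2) (Fin 2) ℂ}

lemma one_sub_four_mul_det_re (hρ : ρ.IsHermitian) (htr : ρ.trace = 1) :
    1 - 4 * ρ.det.re = ∑ k, bloch ρ k ^ 2 := by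
  have h00 : (ρ 0 0).im = 0 := Complex.conj_eq_iff_im.1 (hρ.apply 0 0)
  have h10 : ρ 1 0 = star (ρ 0 1) := by rw [← hρ.apply 0 1, star_star]
  have h11 : ρ 1 1 = 1 - ρ 0 0 := by rw [← htr, trace_fin_two]; ring
  simp [det_fin_two, h10, h11, h00, bloch, Fin.sum_univ_three]
  ring

lemma sum_bloch_sq_le_one (hρ : IsDensity ρ) : ∑ k, bloch ρ k ^ 2 ≤ 1 := by
  rw [← one_sub_four_mul_det_re hρ.1.1 hρ.2, sub_le_self_iff]
  exact mul_nonneg zero_le_four (Complex.nonneg_iff.1 hρ.1.det_nonneg).1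

lemma bloch_one_sub : bloch (1 - ρ) = -bloch ρ := by
  ext k
  fin_cases k <;> simp [bloch]; ring

end Bloch

section PauliChannel

lemma conjTranspose_pauli (i : Fin 4) : (pauli i)ᴴ = pauli i := by
  ext a b
  fin_cases i <;> fin_cases a <;> fin_cases b <;> simp [pauli, conjTranspose_apply]

lemma pauli_mul_self (i : Fin 4) : pauli i * pauli i = 1 := by
  ext a b
  fin_cases i <;> fin_cases a <;> fin_cases b <;> simp [pauli, mul_apply, Fin.sum_univ_two]

def pauliScaling (p : Fin 4 → ℝ) : Fin 3 → ℝ :=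
  ![p 0 + p 1 - p 2 - p 3, p 0 - p 1 + p 2 - p 3, p 0 - p 1 - p 2 + p 3]

variable {p : Fin 4 → ℝ}

lemma pauliChannel_add (A B : Matrix (Fin 2) (Fin 2) ℂ) :
    pauliChannel p (A + B) = pauliChannel p A + pauliChannel p B := by
  simp only [pauliChannel, mul_add, add_mul, smul_add, Finset.sum_add_distrib]

lemma pauliChannel_one (hsum : ∑ i, p i = 1) : pauliChannel p 1 = 1 := by
  simp only [pauliChannel, mul_one, pauli_mul_self, ← Finset.sum_smul, ← Complex.ofReal_sum, hsum,
    Complex.ofReal_one, one_smul]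

lemma trace_pauliChannel (ρ : Matrix (Fin 2) (Fin 2) ℂ) :
    (pauliChannel p ρ).trace = ((∑ i, p i : ℝ) : ℂ) * ρ.trace := by
  simp only [pauliChannel, trace_sum, trace_smul, trace_mul_cycle, pauli_mul_self, one_mul,
    smul_eq_mul, Complex.ofReal_sum, Finset.sum_mul]

lemma isHermitian_pauliChannel {ρ : Matrix (Fin 2) (Fin 2) ℂ} (hρ : ρ.IsHermitian) :
    (pauliChannel p ρ).IsHermitian := by
  simp only [IsHermitian, pauliChannel, conjTranspose_sum, conjTranspose_smul, conjTranspose_mul,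
    conjTranspose_pauli, hρ.eq, Matrix.mul_assoc, Complex.star_def, Complex.conj_ofReal]

lemma posSemidef_pauliChannel (hp : ∀ i, 0 ≤ p i) {ρ : Matrix (Fin 2) (Fin 2) ℂ}
    (hρ : ρ.PosSemidef) : (pauliChannel p ρ).PosSemidef := by
  refine posSemidef_sum _ fun i _ => PosSemidef.smul ?_ (Complex.zero_le_real.2 (hp i))
  simpa [conjTranspose_pauli] using hρ.conjTranspose_mul_mul_same (pauli i)

lemma isDensity_pauliChannel (hp : ∀ i, 0 ≤ p i) (hsum : ∑ i, p i = 1)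
    {ρ : Matrix (Fin 2) (Fin 2) ℂ} (hρ : IsDensity ρ) : IsDensity (pauliChannel p ρ) :=
  ⟨posSemidef_pauliChannel hp hρ.1, by rw [trace_pauliChannel, hsum, hρ.2]; simp⟩

lemma pauliChannel_apply_zero_zero (ρ : Matrix (Fin 2) (Fin 2) ℂ) :
    pauliChannel p ρ 0 0 = (p 0 + p 3 : ℝ) * ρ 0 0 + (p 1 + p 2 : ℝ) * ρ 1 1 := by
  simp [pauliChannel, pauli, Fin.sum_univ_four, Matrix.sum_apply, mul_apply, Fin.sum_univ_two]
  ring_nf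
  rw [Complex.I_sq]
  ring

lemma pauliChannel_apply_zero_one (ρ : Matrix (Fin 2) (Fin 2) ℂ) :
    pauliChannel p ρ 0 1 = (p 0 - p 3 : ℝ) * ρ 0 1 + (p 1 - p 2 : ℝ) * ρ 1 0 := by
  simp [pauliChannel, pauli, Fin.sum_univ_four, Matrix.sum_apply, mul_apply, Fin.sum_univ_two]
  ring_nf
  rw [Complex.I_sq]
  ring

lemma bloch_pauliChannel (hsum : ∑ i, p i = 1) {ρ : Matrix (Fin 2) (Fin 2) ℂ}
    (hρ : ρ.IsHermitian) (htr : ρ.trace = 1) :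
    bloch (pauliChannel p ρ) = pauliScaling p * bloch ρ := by
  have h10 : ρ 1 0 = star (ρ 0 1) := by rw [← hρ.apply 0 1, star_star]
  have h11 : ρ 1 1 = 1 - ρ 0 0 := by rw [← htr, trace_fin_two]; ring
  have hsum' : p 0 + p 1 + p 2 + p 3 = 1 := by rw [← hsum, Fin.sum_univ_four]
  ext k
  fin_cases k <;>
    simp [bloch, pauliScaling, pauliChannel_apply_zero_zero, pauliChannel_apply_zero_one, h10, h11]
  · ring
  · ring
  · linear_combination hsum'

end PauliChannel

section MinimalOutputEntropy

variable {p : Fin 4 → ℝ}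

lemma binEnt_le_vN_pauliChannel (hp : ∀ i, 0 ≤ p i) (hsum : ∑ i, p i = 1) {l : ℝ}
    (hscale : ∀ k, pauliScaling p k ^ 2 ≤ (2 * l - 1) ^ 2) (hl : (2 * l - 1) ^ 2 ≤ 1)
    {ρ : Matrix (Fin 2) (Fin 2) ℂ} (hρ : IsDensity ρ) : binEnt l ≤ vN (pauliChannel p ρ) := by
  have hΛρ := isDensity_pauliChannel hp hsum hρ
  refine binEnt_le_vN_of_le_sq hΛρ.1.1 hΛρ.2 ?_ hl
  rw [one_sub_four_mul_det_re hΛρ.1.1 hΛρ.2, bloch_pauliChannel hsum hρ.1.1 hρ.2]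
  calc ∑ k, (pauliScaling p * bloch ρ) k ^ 2
      ≤ ∑ k, (2 * l - 1) ^ 2 * bloch ρ k ^ 2 := by
        gcongr with k
        rw [Pi.mul_apply, mul_pow]
        exact mul_le_mul_of_nonneg_right (hscale k) (sq_nonneg _)
    _ = (2 * l - 1) ^ 2 * ∑ k, bloch ρ k ^ 2 := (Finset.mul_sum ..).symm
    _ ≤ (2 * l - 1) ^ 2 := mul_le_of_le_one_right (sq_nonneg _) (sum_bloch_sq_le_one hρ)

lemma vN_pauliChannel_of_bloch_eq_single (hsum : ∑ i, p i = 1) {ρ : Matrix (Fin 2) (Fin 2) ℂ}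
    (hρ : ρ.IsHermitian) (htr : ρ.trace = 1) {k : Fin 3} {s : ℝ} (hb : bloch ρ = Pi.single k s)
    (hs : s ^ 2 = 1) {l : ℝ} (hk : pauliScaling p k ^ 2 = (2 * l - 1) ^ 2) :
    vN (pauliChannel p ρ) = binEnt l := by
  have hΛρ := isHermitian_pauliChannel (p := p) hρ
  have htrΛρ : (pauliChannel p ρ).trace = 1 := by rw [trace_pauliChannel, hsum, htr]; simp
  refine vN_eq_binEnt_of_sq_eq hΛρ htrΛρ ?_
  rw [one_sub_four_mul_det_re hΛρ htrΛρ, bloch_pauliChannel hsum hρ htr, hb]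
  simp [Pi.single_apply, mul_pow, hs, hk]

end MinimalOutputEntropy

section PairSums

variable {p : Fin 4 → ℝ} {lam : ℝ}

lemma pauliScaling_sq_le_one (hp : ∀ i, 0 ≤ p i) (hsum : ∑ i, p i = 1) (k : Fin 3) :
    pauliScaling p k ^ 2 ≤ 1 := by
  have hsum' : p 0 + p 1 + p 2 + p 3 = 1 := by rw [← hsum, Fin.sum_univ_four]
  have := hp 0; have := hp 1; have := hp 2; have := hp 3
  rw [sq_le_one_iff_abs_le_one, abs_le]
  fin_cases k <;> simp only [pauliScaling] <;> constructor <;> simp <;> linarith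

lemma pauliScaling_sq_le (hsum : ∑ i, p i = 1)
    (hlam : lam ∈ upperBounds {x : ℝ | ∃ i j : Fin 4, i ≠ j ∧ x = p i + p j}) (k : Fin 3) :
    pauliScaling p k ^ 2 ≤ (2 * lam - 1) ^ 2 := by
  have hsum' : p 0 + p 1 + p 2 + p 3 = 1 := by rw [← hsum, Fin.sum_univ_four]
  have h (i j : Fin 4) (hij : i ≠ j) : p i + p j ≤ lam := hlam ⟨i, j, hij, rfl⟩
  have := h 0 1 (by decide); have := h 0 2 (by decide); have := h 0 3 (by decide)
  have := h 1 2 (by decide); have := h 1 3 (by decide); have := h 2 3 (by decide)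
  fin_cases k <;> simp only [pauliScaling] <;> exact sq_le_sq' (by simp; linarith) (by simp; linarith)

lemma exists_pauliScaling_sq_eq (hsum : ∑ i, p i = 1)
    (hlam : lam ∈ {x : ℝ | ∃ i j : Fin 4, i ≠ j ∧ x = p i + p j}) :
    ∃ k, pauliScaling p k ^ 2 = (2 * lam - 1) ^ 2 := by
  obtain ⟨i, j, hij, rfl⟩ := hlam
  have hp3 : p 3 = 1 - p 0 - p 1 - p 2 := by rw [← hsum, Fin.sum_univ_four]; ring
  fin_cases i <;> fin_cases j <;> simp only [ne_eq, not_true_eq_false] at hij <;>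
    first
    | (refine ⟨0, ?_⟩; simp [pauliScaling, hp3]; ring1)
    | (refine ⟨1, ?_⟩; simp [pauliScaling, hp3]; ring1)
    | (refine ⟨2, ?_⟩; simp [pauliScaling, hp3]; ring1)

end PairSums

def qubitPerp (φ : Fin 2 → ℂ) : Fin 2 → ℂ := ![-star (φ 1), star (φ 0)]

lemma sum_norm_sq_qubitPerp (φ : Fin 2 → ℂ) :
    ∑ x, ‖qubitPerp φ x‖ ^ 2 = ∑ x, ‖φ x‖ ^ 2 := by
  simp [qubitPerp, Fin.sum_univ_two, add_comm]

lemma proj_add_proj_qubitPerp {φ : Fin 2 → ℂ} (hφ : ∑ x, ‖φ x‖ ^ 2 = 1) :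
    proj φ + proj (qubitPerp φ) = 1 := by
  rw [Fin.sum_univ_two] at hφ
  ext a b
  fin_cases a <;> fin_cases b <;> simp [proj, qubitPerp, Complex.mul_conj', Complex.conj_mul']
  · exact_mod_cast hφ
  · ring
  · ring
  · exact_mod_cast (add_comm _ _).trans hφ

lemma exists_bloch_proj_eq_single (k : Fin 3) :
    ∃ φ : Fin 2 → ℂ, ∑ x, ‖φ x‖ ^ 2 = 1 ∧ bloch (proj φ) = Pi.single k 1 := by
  set r : ℝ := (√2)⁻¹
  have hr : r ^ 2 = 2⁻¹ := by simp [r]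
  fin_cases k
  · refine ⟨![(r : ℂ), r], by norm_num [Fin.sum_univ_two, hr], ?_⟩
    ext j; fin_cases j <;> simp [bloch, proj] <;> linear_combination 2 * hr
  · refine ⟨![(r : ℂ), r * Complex.I], by norm_num [Fin.sum_univ_two, hr], ?_⟩
    ext j; fin_cases j <;> simp [bloch, proj] <;> linear_combination 2 * hr
  · refine ⟨![1, 0], by simp, ?_⟩
    ext j; fin_cases j <;> norm_num [bloch, proj]

lemma holevoCap_eq_one_sub {Λ : Matrix (Fin 2) (Fin 2) ℂ → Matrix (Fin 2) (Fin 2) ℂ}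
    (hΛ : ∀ ρ, IsDensity ρ → IsDensity (Λ ρ)) (hadd : ∀ A B, Λ (A + B) = Λ A + Λ B)
    (hone : Λ 1 = 1) {m : ℝ} (hm : ∀ ρ, IsDensity ρ → m ≤ vN (Λ ρ))
    {ρ₁ ρ₂ : Matrix (Fin 2) (Fin 2) ℂ} (hρ₁ : IsDensity ρ₁) (hρ₂ : IsDensity ρ₂)
    (hρ : ρ₁ + ρ₂ = 1) (hv₁ : vN (Λ ρ₁) = m) (hv₂ : vN (Λ ρ₂) = m) :
    holevoCap Λ = 1 - m := by
  refine IsGreatest.csSup_eq ⟨⟨2, ![2⁻¹, 2⁻¹], ![ρ₁, ρ₂], ?_, ?_, ?_, ?_⟩, ?_⟩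
  · intro i
    fin_cases i <;> norm_num
  · norm_num
  · intro i
    fin_cases i <;> assumption
  · have havg : ∑ i, ((![2⁻¹, 2⁻¹] : Fin 2 → ℝ) i : ℂ) • Λ (![ρ₁, ρ₂] i) = (2⁻¹ : ℂ) • 1 := by
      simp only [Fin.sum_univ_two, cons_val_zero, cons_val_one, cons_val_fin_one]
      rw [← smul_add, ← hadd, hρ, hone]
      push_cast
      rfl
    rw [havg, vN_two_inv_smul_one]
    simp [Fin.sum_univ_two, hv₁, hv₂]
    ring
  · rintro _ ⟨k, q, ρs, hq, hq₁, hρs, rfl⟩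
    have havg := isDensity_sum_smul hq hq₁ fun i => hΛ _ (hρs i)
    have hmix : m ≤ ∑ i, q i * vN (Λ (ρs i)) := calc
      m = ∑ i, q i * m := by rw [← Finset.sum_mul, hq₁, one_mul]
      _ ≤ _ := Finset.sum_le_sum fun i _ => mul_le_mul_of_nonneg_left (hm _ (hρs i)) (hq i)
    linarith [vN_le_one havg.1.1 havg.2]

/-- minimal output entropy of a Pauli channel is H(λ), where λ is the sum of
the two largest of p₀,…,p₃; consequently C₁(Λ) = 1 − min_ψ S(Λ(|ψ⟩⟨ψ|)) = 1 − H(1−λ). -/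
theorem stmt17 (p : Fin 4 → ℝ) (hp : ∀ i, 0 ≤ p i) (hsum : ∑ i, p i = 1)
    (lam : ℝ) (hlam : IsGreatest {x : ℝ | ∃ i j : Fin 4, i ≠ j ∧ x = p i + p j} lam) :
    IsLeast {s : ℝ | ∃ ψ : Fin 2 → ℂ, (∑ x, ‖ψ x‖ ^ 2 = 1) ∧
        s = vN (pauliChannel p (proj ψ))} (binEnt lam) ∧
    holevoCap (pauliChannel p) =
      1 - sInf {s : ℝ | ∃ ψ : Fin 2 → ℂ, (∑ x, ‖ψ x‖ ^ 2 = 1) ∧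
        s = vN (pauliChannel p (proj ψ))} ∧
    holevoCap (pauliChannel p) = 1 - binEnt (1 - lam) := by
  obtain ⟨k, hk⟩ := exists_pauliScaling_sq_eq hsum hlam.1
  have hl : (2 * lam - 1) ^ 2 ≤ 1 := hk ▸ pauliScaling_sq_le_one hp hsum k
  have hlow (ρ) (hρ : IsDensity ρ) : binEnt lam ≤ vN (pauliChannel p ρ) :=
    binEnt_le_vN_pauliChannel hp hsum (pauliScaling_sq_le hsum hlam.2) hl hρ
  obtain ⟨φ, hφ, hbφ⟩ := exists_bloch_proj_eq_single k
  have hφ' : ∑ x, ‖qubitPerp φ x‖ ^ 2 = 1 := (sum_norm_sq_qubitPerp φ).trans hφ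
  have hρ := isDensity_proj hφ
  have hρ' := isDensity_proj hφ'
  have hv : vN (pauliChannel p (proj φ)) = binEnt lam :=
    vN_pauliChannel_of_bloch_eq_single hsum hρ.1.1 hρ.2 hbφ (one_pow 2) hk
  have hv' : vN (pauliChannel p (proj (qubitPerp φ))) = binEnt lam := by
    refine vN_pauliChannel_of_bloch_eq_single hsum hρ'.1.1 hρ'.2 ?_ neg_one_sq hk
    rw [eq_sub_of_add_eq' (proj_add_proj_qubitPerp hφ), bloch_one_sub, hbφ, Pi.single_neg]
  have hleast : IsLeast {s : ℝ | ∃ ψ : Fin 2 → ℂ, (∑ x, ‖ψ x‖ ^ 2 = 1) ∧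
      s = vN (pauliChannel p (proj ψ))} (binEnt lam) :=
    ⟨⟨φ, hφ, hv.symm⟩, by rintro _ ⟨ψ, hψ, rfl⟩; exact hlow _ (isDensity_proj hψ)⟩
  have hcap : holevoCap (pauliChannel p) = 1 - binEnt lam :=
    holevoCap_eq_one_sub (fun _ => isDensity_pauliChannel hp hsum) pauliChannel_add
      (pauliChannel_one hsum) hlow hρ hρ' (proj_add_proj_qubitPerp hφ) hv hv'
  exact ⟨hleast, by rw [hleast.csInf_eq, hcap], by rw [hcap, binEnt_one_sub]⟩

end QIT
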